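/- arXiv:2103.06103 — 5 statements merged into one kernel-verified Lean document; each statement's English description precedes it below -/
import Mathlib

section
/- For every positive integer k, Σ_{i=1}^∞ h_i/(i(k+i)) = 2·ln(2)·h_k/k + (1/k)·Σ_{i=1}^k H_{i−1}/(2i−1). -/
/-!
Expanding `h_i = ∑_{j ≤ i} 1/(2j-1)` and exchanging the order of summation (all terms are
nonnegative), the tail `∑_{i ≥ j} 1/(i(k+i)) = (1/k) ∑_{i ≥ j} (1/i - 1/(i+k))` telescopes to
`(1/k) ∑_{m<k} 1/(j+m)`. It remains to evaluate `∑_j 1/((2j-1)(j+m))`: by partial fractions it is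
`(2 ∑_j (1/(2j-1) - 1/(2j)) + ∑_j (1/j - 1/(j+m))) / (2m+1) = (2 log 2 + H_m) / (2m+1)`, the first
series being the paired alternating harmonic series and the second another telescoping sum.
-/

open scoped BigOperators

/-- Odd harmonic number `h_k^{(n)} = ∑_{i=1}^k 1/(2i-1)^n`. -/
noncomputable def h (n k : ℕ) : ℝ := ∑ i ∈ Finset.range k, (1 : ℝ) / (2 * (i : ℝ) + 1) ^ n

/-- Generalized harmonic number `H_k^{(n)} = ∑_{i=1}^k 1/i^n`. -/
noncomputable def H (n k : ℕ) : ℝ := ∑ i ∈ Finset.range k, (1 : ℝ) / ((i : ℝ) + 1) ^ n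

/-- Riemann zeta value at a positive integer `m ≥ 2`: `ζ(m) = ∑_{n≥1} 1/n^m`. -/
noncomputable def Z (m : ℕ) : ℝ := ∑' n : ℕ+, (1 : ℝ) / ((n : ℕ) : ℝ) ^ m

open Filter Finset Topology

theorem hasSum_rows_of_hasSum_cols_of_nonneg {α β : Type*} {f : α → β → ℝ}
    (hf : ∀ a b, 0 ≤ f a b) {r : α → ℝ} {c : β → ℝ} {s : ℝ} (hr : ∀ a, HasSum (f a) (r a))
    (hc : ∀ b, HasSum (fun a ↦ f a b) (c b)) (hs : HasSum c s) : HasSum r s := by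
  set g : β × α → ℝ := fun p ↦ f p.2 p.1
  have hg : Summable g := by
    refine (summable_prod_of_nonneg fun p ↦ hf p.2 p.1).2 ⟨fun b ↦ (hc b).summable, ?_⟩
    simpa only [g, (hc _).tsum_eq] using hs.summable
  have hgs : HasSum g s := by
    convert hg.hasSum
    exact hs.unique (hg.hasSum.prod_fiberwise hc)
  exact ((Equiv.prodComm α β).hasSum_iff.2 hgs).prod_fiberwise hr

theorem hasSum_sum_range_succ_mul {a b t : ℕ → ℝ} (ha : ∀ j, 0 ≤ a j) (hb : ∀ i, 0 ≤ b i)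
    (ht : ∀ j, HasSum (fun n ↦ b (n + j)) (t j)) {s : ℝ} (hs : HasSum (fun j ↦ a j * t j) s) :
    HasSum (fun i ↦ (∑ j ∈ range (i + 1), a j) * b i) s := by
  set f : ℕ → ℕ → ℝ := fun i j ↦ if j ≤ i then a j * b i else 0
  refine hasSum_rows_of_hasSum_cols_of_nonneg (f := f) (fun i j ↦ ?_) (fun i ↦ ?_) (fun j ↦ ?_) hs
  · simp only [f]
    split_ifs
    · exact mul_nonneg (ha j) (hb i)
    · exact le_rfl
  · have hzero : ∀ j ∉ range (i + 1), f i j = 0 := fun j hj ↦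
      if_neg (by simpa [Nat.lt_succ_iff] using hj)
    convert hasSum_sum_of_ne_finset_zero (L := .unconditional ℕ) hzero using 1
    rw [sum_mul]
    exact sum_congr rfl fun j hj ↦ (if_pos (Nat.lt_succ_iff.1 (mem_range.1 hj))).symm
  · rw [← hasSum_nat_add_iff' j]
    have hbelow : ∑ i ∈ range j, f i j = 0 :=
      sum_eq_zero fun i hi ↦ if_neg (by simpa using mem_range.1 hi)
    simpa only [hbelow, sub_zero, f, Nat.le_add_left, if_true] using (ht j).mul_left (a j)

theorem hasSum_sub_succ_of_antitone {g : ℕ → ℝ} (hg : Antitone g) (hlim : Tendsto g atTop (𝓝 0)) :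
    HasSum (fun n ↦ g n - g (n + 1)) (g 0) := by
  rw [hasSum_iff_tendsto_nat_of_nonneg (fun n ↦ sub_nonneg.2 (hg n.le_succ))]
  simp_rw [sum_range_sub']
  simpa using tendsto_const_nhds.sub hlim

theorem hasSum_sub_add_of_antitone {g : ℕ → ℝ} (hg : Antitone g) (hlim : Tendsto g atTop (𝓝 0))
    (m : ℕ) : HasSum (fun n ↦ g n - g (n + m)) (∑ l ∈ range m, g l) := by
  have hshift (l : ℕ) : HasSum (fun n ↦ g (n + l) - g (n + 1 + l)) (g l) := by
    simpa using hasSum_sub_succ_of_antitone (g := fun n ↦ g (n + l))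
      (hg.comp_monotone fun _ _ h ↦ Nat.add_le_add_right h l) (hlim.comp (tendsto_add_atTop_nat l))
  convert hasSum_sum fun l _ ↦ hshift l using 2 with n
  simpa [add_assoc, add_comm 1, add_left_comm] using (sum_range_sub' (fun l ↦ g (n + l)) m).symm

theorem antitone_one_div_add_one {c : ℝ} (hc : 0 ≤ c) : Antitone fun n : ℕ ↦ 1 / (c + n + 1) :=
  fun m n hmn ↦ one_div_le_one_div_of_le (by positivity) (by gcongr)

theorem tendsto_one_div_add_one (c : ℝ) : Tendsto (fun n : ℕ ↦ 1 / (c + n + 1)) atTop (𝓝 0) := by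
  have : Tendsto (fun n : ℕ ↦ c + n + 1) atTop atTop :=
    tendsto_atTop_add_const_right _ 1 (tendsto_atTop_add_const_left _ c tendsto_natCast_atTop_atTop)
  simpa only [one_div, Pi.inv_def] using this.inv_tendsto_atTop

theorem hasSum_one_div_mul_add_tail (j : ℕ) {k : ℕ} (hk : k ≠ 0) :
    HasSum (fun n : ℕ ↦ 1 / ((↑(n + j) + 1) * (↑(n + j) + 1 + k) : ℝ))
      (1 / k * ∑ m ∈ range k, 1 / (j + m + 1 : ℝ)) := by
  have hterm (n : ℕ) : 1 / k * (1 / (j + n + 1) - 1 / (j + ↑(n + k) + 1)) =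
      1 / ((↑(n + j) + 1) * (↑(n + j) + 1 + k) : ℝ) := by
    push_cast
    field_simp
    ring
  simpa only [hterm] using (hasSum_sub_add_of_antitone (antitone_one_div_add_one j.cast_nonneg)
    (tendsto_one_div_add_one j) k).mul_left (1 / k : ℝ)

theorem harmonic_two_mul_sub_harmonic (n : ℕ) :
    (harmonic (2 * n) - harmonic n : ℝ) =
      ∑ j ∈ range n, (1 / (2 * j + 1) - 1 / (2 * j + 2 : ℝ)) := by
  induction n with
  | zero => simp
  | succ n ih =>
    rw [show 2 * (n + 1) = 2 * n + 1 + 1 by ring, harmonic_succ, harmonic_succ, harmonic_succ,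
      sum_range_succ, ← ih]
    push_cast
    field_simp
    ring

theorem tendsto_harmonic_two_mul_sub_harmonic :
    Tendsto (fun n : ℕ ↦ (harmonic (2 * n) - harmonic n : ℝ)) atTop (𝓝 (Real.log 2)) := by
  have hdouble : Tendsto (fun n : ℕ ↦ 2 * n) atTop atTop :=
    tendsto_id.const_mul_atTop' two_pos
  have hlim := ((Real.tendsto_harmonic_sub_log.comp hdouble).sub
    Real.tendsto_harmonic_sub_log).const_add (Real.log 2)
  rw [sub_self, add_zero] at hlim
  refine hlim.congr' ?_
  filter_upwards [eventually_ne_atTop 0] with n hn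
  simp only [Function.comp_apply, Nat.cast_mul, Nat.cast_ofNat]
  rw [Real.log_mul two_ne_zero (Nat.cast_ne_zero.2 hn)]
  ring

theorem hasSum_one_div_odd_sub_one_div_even :
    HasSum (fun j : ℕ ↦ 1 / (2 * j + 1) - 1 / (2 * j + 2 : ℝ)) (Real.log 2) := by
  have hnonneg (j : ℕ) : 0 ≤ 1 / (2 * j + 1) - 1 / (2 * j + 2 : ℝ) :=
    sub_nonneg.2 (one_div_le_one_div_of_le (by positivity) (by linarith))
  rw [hasSum_iff_tendsto_nat_of_nonneg hnonneg]
  simpa only [harmonic_two_mul_sub_harmonic] using tendsto_harmonic_two_mul_sub_harmonic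

theorem hasSum_one_div_odd_mul_add (m : ℕ) :
    HasSum (fun j : ℕ ↦ 1 / ((2 * j + 1) * (j + m + 1) : ℝ))
      ((2 * Real.log 2 + H 1 m) / (2 * m + 1)) := by
  have hH : HasSum (fun j : ℕ ↦ 1 / (j + 1) - 1 / (↑(j + m) + 1 : ℝ)) (H 1 m) := by
    simpa only [H, zero_add, pow_one] using
      hasSum_sub_add_of_antitone (antitone_one_div_add_one le_rfl) (tendsto_one_div_add_one 0) m
  have hterm (j : ℕ) : 1 / (2 * m + 1) * (2 * (1 / (2 * j + 1) - 1 / (2 * j + 2)) +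
      (1 / (j + 1) - 1 / (↑(j + m) + 1))) = 1 / ((2 * j + 1) * (j + m + 1) : ℝ) := by
    push_cast
    field_simp
    ring
  rw [div_eq_mul_one_div, mul_comm]
  simpa only [hterm] using
    ((hasSum_one_div_odd_sub_one_div_even.mul_left 2).add hH).mul_left (1 / (2 * m + 1) : ℝ)

theorem stmt3 (k : ℕ+) :
    (∑' i : ℕ+, h 1 (i : ℕ) / (((i : ℕ) : ℝ) * (((k : ℕ) : ℝ) + ((i : ℕ) : ℝ))))
      = 2 * Real.log 2 * h 1 (k : ℕ) / ((k : ℕ) : ℝ)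
        + (1 / ((k : ℕ) : ℝ)) * ∑ i ∈ Finset.range (k : ℕ), H 1 i / (2 * (i : ℝ) + 1) := by
  have hk : (k : ℕ) ≠ 0 := k.ne_zero
  have hinner (j : ℕ) : 1 / (2 * j + 1 : ℝ) * (1 / k * ∑ m ∈ range k, 1 / (j + m + 1 : ℝ)) =
      1 / k * ∑ m ∈ range k, 1 / ((2 * j + 1) * (j + m + 1) : ℝ) := by
    simp only [mul_sum, one_div_mul_one_div]
    exact sum_congr rfl fun m _ ↦ by ring
  have hswap := hasSum_sum_range_succ_mul (a := fun j ↦ 1 / (2 * j + 1 : ℝ))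
    (b := fun i ↦ 1 / ((i + 1) * (i + 1 + k) : ℝ)) (fun j ↦ by positivity) (fun i ↦ by positivity)
    (fun j ↦ hasSum_one_div_mul_add_tail j hk) (by simpa only [hinner] using
      (hasSum_sum fun m _ ↦ hasSum_one_div_odd_mul_add m).mul_left (1 / (k : ℕ) : ℝ))
  rw [tsum_pnat_eq_tsum_succ (f := fun n ↦ h 1 n / ((n : ℝ) * ((k : ℕ) + n)))]
  convert hswap.tsum_eq using 1
  · refine tsum_congr fun n ↦ ?_
    simp only [h, pow_one]
    push_cast
    ring
  · have hsplit : ∑ m ∈ range k, (2 * Real.log 2 + H 1 m) / (2 * m + 1) =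
        2 * Real.log 2 * h 1 k + ∑ m ∈ range k, H 1 m / (2 * m + 1) := by
      rw [h, mul_sum, ← sum_add_distrib]
      exact sum_congr rfl fun m _ ↦ by rw [pow_one]; ring
    rw [hsplit]
    ring
end

section
/- For every positive integer k, Σ_{i=1}^∞ h_{i+k}/(i(i+k)) = −2·ln(2)·h_k/k + (1/k)·Σ_{i=1}^k h_i/i + h_k^{(2)}/k + h_k²/k. -/
open scoped BigOperators

/-!
Since `k / (i (i + k)) = 1 / i - 1 / (i + k)`, the `N`-th partial sum times `k` is
`∑ h_{i+k} / i - ∑ h_{i+k} / (i + k)`. The second sum is `∑ h_i / i` shifted by `k`, so the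
difference telescopes up to `k` terms at each end. In the first,
`h_{i+k} = h_i + ∑_{m<k} 1/(2i+2m+1)`, and the partial fractions
`(2m+1) / (i (2i+2m+1)) = 1/i - 2/(2i+2m+1)` turn the double sum into
`∑_{m<k} (H_N - 2 h_{N+m+1} + 2 h_{m+1}) / (2m+1)`. Finally
`H_N - 2 h_N = 2 (H_N - H_{2N}) → -2 log 2`, `h_N / N → 0`, and
`2 ∑_{m<k} h_{m+1} / (2m+1) = h_k² + h_k^{(2)}`.
-/

open Finset Filter Topology

lemma sum_range_sub_comp_add {M : Type*} [AddCommGroup M] (f : ℕ → M) (k N : ℕ) :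
    ∑ n ∈ range N, (f n - f (n + k)) = ∑ j ∈ range k, f j - ∑ j ∈ range k, f (N + j) := by
  have hN := sum_range_add f N k
  have hk := sum_range_add f k N
  rw [add_comm k N, hN] at hk
  simp only [sum_sub_distrib, add_comm _ k]
  rw [sub_eq_sub_iff_add_eq_add]
  exact hk

lemma sum_Icc_one_eq_sum_range {M : Type*} [AddCommMonoid M] (f : ℕ → M) (k : ℕ) :
    ∑ i ∈ Icc 1 k, f i = ∑ j ∈ range k, f (j + 1) := by
  rw [range_eq_Ico, sum_Ico_add', zero_add, Ico_add_one_right_eq_Icc]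

lemma h_succ (n k : ℕ) : h n (k + 1) = h n k + 1 / (2 * (k : ℝ) + 1) ^ n := by
  simp only [h, sum_range_succ]

lemma h_nonneg (n k : ℕ) : 0 ≤ h n k := sum_nonneg fun _ _ => by positivity

lemma h_one_add (a b : ℕ) :
    h 1 (a + b) = h 1 a + ∑ m ∈ range b, 1 / (2 * ((a : ℝ) + m) + 1) := by
  simp only [h, sum_range_add, pow_one, Nat.cast_add]

lemma sq_h_one_add_h_two (k : ℕ) :
    h 1 k ^ 2 + h 2 k = 2 * ∑ m ∈ range k, h 1 (m + 1) / (2 * (m : ℝ) + 1) := by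
  induction k with
  | zero => simp [h]
  | succ k ih =>
    rw [sum_range_succ, mul_add, ← ih, h_succ, h_succ]
    field_simp
    ring

lemma harmonic_two_mul (N : ℕ) : (harmonic (2 * N) : ℝ) = h 1 N + harmonic N / 2 := by
  induction N with
  | zero => simp [h]
  | succ N ih =>
    rw [show 2 * (N + 1) = 2 * N + 1 + 1 by ring, harmonic_succ, harmonic_succ, harmonic_succ,
      h_succ]
    push_cast
    rw [ih]
    field_simp
    ring

lemma tendsto_harmonic_sub_two_mul_h_one :
    Tendsto (fun N : ℕ => (harmonic N : ℝ) - 2 * h 1 N) atTop (𝓝 (-2 * Real.log 2)) := by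
  have hγ := Real.tendsto_harmonic_sub_log
  have hγ2 := hγ.comp (tendsto_id.const_mul_atTop' two_pos)
  have := ((hγ2.sub hγ).add_const (Real.log 2)).const_mul (-2)
  rw [sub_self, zero_add] at this
  refine this.congr' ?_
  filter_upwards [eventually_ne_atTop 0] with N hN
  have hlog : Real.log ((2 * N : ℕ) : ℝ) = Real.log 2 + Real.log N := by
    push_cast
    exact Real.log_mul two_ne_zero (Nat.cast_ne_zero.mpr hN)
  simp only [Function.comp_apply, id, hlog, harmonic_two_mul]
  ring

lemma tendsto_one_div_two_mul_add_one (a : ℝ) :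
    Tendsto (fun N : ℕ => 1 / (2 * ((N : ℝ) + a) + 1)) atTop (𝓝 0) :=
  tendsto_const_nhds.div_atTop <| (((tendsto_natCast_atTop_atTop.atTop_add
    tendsto_const_nhds).const_mul_atTop two_pos).atTop_add tendsto_const_nhds)

lemma tendsto_h_one_add_sub (m : ℕ) :
    Tendsto (fun N : ℕ => h 1 (N + m) - h 1 N) atTop (𝓝 0) := by
  simp_rw [h_one_add, add_sub_cancel_left]
  simpa using tendsto_finsetSum (range m) fun (t : ℕ) _ => tendsto_one_div_two_mul_add_one t

lemma tendsto_h_one_div : Tendsto (fun n : ℕ => h 1 n / n) atTop (𝓝 0) := by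
  refine (tendsto_one_div_two_mul_add_one 0).cesaro.congr fun n => ?_
  simp [h, div_eq_inv_mul]

lemma sum_range_h_one_add_div (k N : ℕ) :
    ∑ n ∈ range N, h 1 (n + 1 + k) / ((n + 1 : ℕ) : ℝ) =
      ∑ n ∈ range N, h 1 (n + 1) / ((n + 1 : ℕ) : ℝ)
        + ∑ m ∈ range k, ((harmonic N : ℝ) - 2 * h 1 (N + (m + 1))) / (2 * m + 1)
        + (h 1 k ^ 2 + h 2 k) := by
  have expand : ∀ n : ℕ, h 1 (n + 1 + k) / ((n + 1 : ℕ) : ℝ) =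
      h 1 (n + 1) / ((n + 1 : ℕ) : ℝ) + ∑ m ∈ range k,
        (1 / ((n : ℝ) + 1) - 2 * (1 / (2 * ((m + 1 : ℕ) + (n : ℝ)) + 1))) / (2 * m + 1) := by
    intro n
    rw [h_one_add, add_div, sum_div]
    congr 1
    refine sum_congr rfl fun m _ => ?_
    push_cast
    field_simp
    ring
  have sum_over_n : ∀ m : ℕ, ∑ n ∈ range N,
      (1 / ((n : ℝ) + 1) - 2 * (1 / (2 * ((m + 1 : ℕ) + (n : ℝ)) + 1))) / (2 * m + 1)
      = ((harmonic N : ℝ) - 2 * h 1 (N + (m + 1))) / (2 * m + 1)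
        + 2 * (h 1 (m + 1) / (2 * m + 1)) := by
    intro m
    rw [← sum_div, sum_sub_distrib, ← mul_sum, add_comm N, h_one_add (m + 1) N]
    push_cast [harmonic, one_div]
    ring
  rw [sum_congr rfl fun n _ => expand n, sum_add_distrib, sum_comm,
    sum_congr rfl fun m _ => sum_over_n m, sum_add_distrib, ← mul_sum, sq_h_one_add_h_two]
  ring

lemma mul_sum_range_h_one_div (k N : ℕ) :
    (k : ℝ) * ∑ n ∈ range N, h 1 (n + 1 + k) / (((n + 1 : ℕ) : ℝ) * ((n + 1 : ℕ) + k : ℝ)) =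
      ∑ m ∈ range k, ((harmonic N : ℝ) - 2 * h 1 (N + (m + 1))) / (2 * m + 1)
        + (h 1 k ^ 2 + h 2 k)
        + ∑ j ∈ range k, h 1 (j + 1) / ((j + 1 : ℕ) : ℝ)
        - ∑ j ∈ range k, h 1 (N + j + 1) / ((N + j + 1 : ℕ) : ℝ) := by
  set G : ℕ → ℝ := fun j => h 1 (j + 1) / ((j + 1 : ℕ) : ℝ)
  have partial_fractions : ∀ n : ℕ,
      (k : ℝ) * (h 1 (n + 1 + k) / (((n + 1 : ℕ) : ℝ) * ((n + 1 : ℕ) + k : ℝ))) =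
        (h 1 (n + 1 + k) / ((n + 1 : ℕ) : ℝ) - G n) + (G n - G (n + k)) := by
    intro n
    simp only [G, Nat.add_right_comm n k 1]
    push_cast
    field_simp
    ring
  rw [mul_sum, sum_congr rfl fun n _ => partial_fractions n, sum_add_distrib, sum_sub_distrib,
    sum_range_h_one_add_div, sum_range_sub_comp_add]
  ring

lemma tendsto_mul_sum_range_h_one_div (k : ℕ) :
    Tendsto (fun N : ℕ => (k : ℝ) *
        ∑ n ∈ range N, h 1 (n + 1 + k) / (((n + 1 : ℕ) : ℝ) * ((n + 1 : ℕ) + k : ℝ)))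
      atTop (𝓝 (-2 * Real.log 2 * h 1 k + (h 1 k ^ 2 + h 2 k)
        + ∑ j ∈ range k, h 1 (j + 1) / ((j + 1 : ℕ) : ℝ))) := by
  simp_rw [mul_sum_range_h_one_div]
  have main : Tendsto (fun N : ℕ =>
      ∑ m ∈ range k, ((harmonic N : ℝ) - 2 * h 1 (N + (m + 1))) / (2 * m + 1))
      atTop (𝓝 (-2 * Real.log 2 * h 1 k)) := by
    rw [h, mul_sum]
    refine tendsto_finsetSum _ fun m _ => ?_
    have := (tendsto_harmonic_sub_two_mul_h_one.sub
      ((tendsto_h_one_add_sub (m + 1)).const_mul 2)).div_const (2 * (m : ℝ) + 1)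
    convert this using 2 <;> ring
  have tail : Tendsto (fun N : ℕ => ∑ j ∈ range k, h 1 (N + j + 1) / ((N + j + 1 : ℕ) : ℝ))
      atTop (𝓝 0) := by
    simpa using tendsto_finsetSum (range k) fun j _ =>
      (tendsto_h_one_div.comp (tendsto_add_atTop_nat (j + 1)) :
        Tendsto (fun N : ℕ => h 1 (N + j + 1) / ((N + j + 1 : ℕ) : ℝ)) atTop (𝓝 0))
  simpa using ((main.add_const _).add_const _).sub tail

theorem stmt6 (k : ℕ+) :
    (∑' i : ℕ+, h 1 ((i : ℕ) + (k : ℕ)) / (((i : ℕ) : ℝ) * (((i : ℕ) : ℝ) + ((k : ℕ) : ℝ))))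
      = -2 * Real.log 2 * h 1 (k : ℕ) / ((k : ℕ) : ℝ)
        + (1 / ((k : ℕ) : ℝ)) * (∑ i ∈ Finset.Icc 1 (k : ℕ), h 1 i / (i : ℝ))
        + h 2 (k : ℕ) / ((k : ℕ) : ℝ) + (h 1 (k : ℕ)) ^ 2 / ((k : ℕ) : ℝ) := by
  have hk : ((k : ℕ) : ℝ) ≠ 0 := Nat.cast_ne_zero.mpr k.ne_zero
  have partial_sums := (tendsto_mul_sum_range_h_one_div k).div_const (k : ℝ)
  simp only [mul_div_cancel_left₀ _ hk] at partial_sums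
  have hasSum := (hasSum_iff_tendsto_nat_of_nonneg
    (fun n => div_nonneg (h_nonneg 1 _) (by positivity)) _).mpr partial_sums
  rw [tsum_pnat_eq_tsum_succ (f := fun i : ℕ => h 1 (i + k) / ((i : ℝ) * ((i : ℝ) + (k : ℕ)))),
    hasSum.tsum_eq, sum_Icc_one_eq_sum_range]
  field_simp
  ring
end

section
/- For all positive integers m, Σ_{i=1}^∞ 1/(i(2m+2i−1)) = (2/(2m−1))·(h_m − ln 2). -/
open scoped BigOperators

open Filter Topology

lemma h1_eq (k : ℕ) : h 1 k = ∑ i ∈ Finset.range k, (1:ℝ)/(2*(i:ℝ)+1) := by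
  simp [h]

lemma h1_harmonic (N : ℕ) : h 1 N = (harmonic (2*N) : ℝ) - (harmonic N : ℝ)/2 := by
  induction N with
  | zero => simp [h]
  | succ n ih =>
    have e : 2*(n+1) = (2*n+1)+1 := by ring
    rw [h1_eq, Finset.sum_range_succ, ← h1_eq, ih, e, harmonic_succ, harmonic_succ,
      harmonic_succ]
    push_cast
    have h1 : (2*(n:ℝ)+1) ≠ 0 := by positivity
    have h2 : (2*(n:ℝ)+2) ≠ 0 := by positivity
    have h3 : ((n:ℝ)+1) ≠ 0 := by positivity
    field_simp
    ring

lemma tendsto_two_mul : Tendsto (fun n : ℕ => 2*n) atTop atTop :=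
  tendsto_atTop_mono (f := fun n : ℕ => n) (fun n => by show n ≤ 2*n; omega) tendsto_id

lemma tendsto_h_diff : Tendsto (fun N : ℕ => (harmonic N : ℝ) - 2 * h 1 N) atTop
    (𝓝 (-(2 * Real.log 2))) := by
  have hlog : Tendsto (fun N : ℕ => (harmonic (2*N) : ℝ) - harmonic N) atTop (𝓝 (Real.log 2)) := by
    have t1 := Real.tendsto_harmonic_sub_log
    have t2 : Tendsto (fun N : ℕ => (harmonic (2*N) : ℝ) - Real.log ((2*N : ℕ) : ℝ)) atTop
        (𝓝 Real.eulerMascheroniConstant) := t1.comp tendsto_two_mul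
    have t3 := t2.sub t1
    rw [sub_self] at t3
    have t4 : Tendsto (fun N : ℕ => ((harmonic (2*N) : ℝ) - harmonic N) - Real.log 2) atTop
        (𝓝 0) := by
      apply t3.congr'
      filter_upwards [eventually_gt_atTop 0] with n hn
      have hl : Real.log ((2*n : ℕ) : ℝ) = Real.log 2 + Real.log n := by
        push_cast
        rw [Real.log_mul (by norm_num) (by positivity)]
      rw [hl]; ring
    have := t4.add_const (Real.log 2)
    simpa using this
  have := hlog.const_mul (-2)
  have e : -2 * Real.log 2 = -(2 * Real.log 2) := by ring
  rw [e] at this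
  apply this.congr
  intro N
  rw [h1_harmonic]
  ring

lemma h1_succ (k : ℕ) : h 1 (k+1) = h 1 k + 1/(2*(k:ℝ)+1) := by
  rw [h1_eq, Finset.sum_range_succ, ← h1_eq]

lemma tendsto_tail (m : ℕ) : Tendsto (fun N : ℕ => h 1 (m+N) - h 1 N) atTop (𝓝 0) := by
  apply squeeze_zero (g := fun N : ℕ => (m:ℝ)/(2*N+1))
  · intro N
    rw [h1_eq, h1_eq, sub_nonneg]
    apply Finset.sum_le_sum_of_subset_of_nonneg
    · exact Finset.range_subset_range.2 (by omega)
    · intro i _ _; positivity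
  · intro N
    rw [h1_eq, h1_eq, add_comm m N, ← Finset.sum_Ico_eq_sub _ (by omega : N ≤ N + m)]
    calc ∑ i ∈ Finset.Ico N (N+m), (1:ℝ)/(2*(i:ℝ)+1)
        ≤ ∑ i ∈ Finset.Ico N (N+m), (1:ℝ)/(2*(N:ℝ)+1) := by
          apply Finset.sum_le_sum
          intro i hi
          have : (N:ℝ) ≤ i := by exact_mod_cast (Finset.mem_Ico.1 hi).1
          apply one_div_le_one_div_of_le (by positivity) (by linarith)
      _ = (m:ℝ)/(2*N+1) := by
          rw [Finset.sum_const, Nat.card_Ico]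
          simp
          ring
  · apply Tendsto.div_atTop tendsto_const_nhds
    have : Tendsto (fun N : ℕ => (N:ℝ)) atTop atTop := tendsto_natCast_atTop_atTop
    exact tendsto_atTop_add_const_right _ 1 (this.const_mul_atTop (by norm_num))

lemma partial_sum (m : ℕ) (hm : 1 ≤ m) (N : ℕ) :
    ∑ i ∈ Finset.range N, (1:ℝ)/(((i:ℝ)+1)*(2*(m:ℝ)+2*((i:ℝ)+1)-1))
      = (1/(2*(m:ℝ)-1)) * ((harmonic N : ℝ) - 2*(h 1 (m+N)) + 2*(h 1 m)) := by
  have hm1 : (1:ℝ) ≤ (m:ℝ) := by exact_mod_cast hm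
  have hc : 2*(m:ℝ)-1 ≠ 0 := by linarith
  induction N with
  | zero => simp
  | succ n ih =>
    rw [Finset.sum_range_succ, ih, harmonic_succ, show m + (n+1) = (m+n)+1 from rfl, h1_succ]
    push_cast
    have d1 : ((n:ℝ)+1) ≠ 0 := by positivity
    have d2 : (2*((m:ℝ)+(n:ℝ))+1) ≠ 0 := by positivity
    have d3 : (2*(m:ℝ)+2*((n:ℝ)+1)-1) ≠ 0 := by
      have : (0:ℝ) < 2*(m:ℝ)+2*((n:ℝ)+1)-1 := by linarith [Nat.cast_nonneg (α := ℝ) n]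
      linarith
    have d4 : (2*((m:ℝ)+((n:ℝ)+1))-1) ≠ 0 := by
      have : (0:ℝ) < 2*((m:ℝ)+((n:ℝ)+1))-1 := by linarith [Nat.cast_nonneg (α := ℝ) n]
      linarith
    field_simp
    ring

theorem stmt7 (m : ℕ+) :
    (∑' i : ℕ+, (1 : ℝ) / (((i : ℕ) : ℝ) * (2 * ((m : ℕ) : ℝ) + 2 * ((i : ℕ) : ℝ) - 1)))
      = (2 / (2 * ((m : ℕ) : ℝ) - 1)) * (h 1 (m : ℕ) - Real.log 2) := by
  set M : ℕ := (m : ℕ) with hM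
  have hm : 1 ≤ M := m.one_le
  have hm1 : (1:ℝ) ≤ (M:ℝ) := by exact_mod_cast hm
  set g : ℕ → ℝ := fun n => (1:ℝ)/(((n:ℝ)+1)*(2*(M:ℝ)+2*((n:ℝ)+1)-1)) with hg
  have heq : (∑' i : ℕ+, (1 : ℝ) / (((i : ℕ) : ℝ) * (2 * ((M : ℕ) : ℝ) + 2 * ((i : ℕ) : ℝ) - 1)))
      = ∑' n : ℕ, g n := by
    rw [← Equiv.pnatEquivNat.symm.tsum_eq]
    apply tsum_congr
    intro n
    simp [hg, Equiv.pnatEquivNat]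
  have hgle : ∀ n : ℕ, g n ≤ 1/((n:ℝ)+1)^2 := by
    intro n
    show (1:ℝ)/(((n:ℝ)+1)*(2*(M:ℝ)+2*((n:ℝ)+1)-1)) ≤ 1/((n:ℝ)+1)^2
    apply one_div_le_one_div_of_le
    · positivity
    · nlinarith [Nat.cast_nonneg (α := ℝ) n, hm1]
  have hsum : Summable g := by
    have hnn : ∀ n : ℕ, 0 ≤ g n := by
      intro n
      show (0:ℝ) ≤ (1:ℝ)/(((n:ℝ)+1)*(2*(M:ℝ)+2*((n:ℝ)+1)-1))
      have h0 : (0:ℝ) ≤ ((n:ℝ)+1)*(2*(M:ℝ)+2*((n:ℝ)+1)-1) := by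
        nlinarith [Nat.cast_nonneg (α := ℝ) n, hm1]
      exact div_nonneg zero_le_one h0
    apply Summable.of_nonneg_of_le hnn hgle
    have : Summable (fun n : ℕ => 1/((n:ℝ))^2) := by
      rw [Real.summable_one_div_nat_pow]; norm_num
    exact_mod_cast (summable_nat_add_iff 1).mpr this
  have ht := hsum.hasSum.tendsto_sum_nat
  have ht2 : Tendsto (fun N => ∑ i ∈ Finset.range N, g i) atTop
      (𝓝 ((2 / (2 * (M : ℝ) - 1)) * (h 1 M - Real.log 2))) := by
    have base : Tendsto (fun N : ℕ =>
        (1/(2*(M:ℝ)-1)) * ((((harmonic N : ℝ) - 2 * h 1 N) - 2 * (h 1 (M+N) - h 1 N)) + 2 * h 1 M))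
        atTop (𝓝 ((1/(2*(M:ℝ)-1)) * ((-(2*Real.log 2) - 2*0) + 2 * h 1 M))) := by
      exact (((tendsto_h_diff.sub ((tendsto_tail M).const_mul 2)).add_const
        (2 * h 1 M)).const_mul _)
    have e : (1/(2*(M:ℝ)-1)) * ((-(2*Real.log 2) - 2*0) + 2 * h 1 M)
        = (2 / (2 * (M : ℝ) - 1)) * (h 1 M - Real.log 2) := by ring
    rw [e] at base
    apply base.congr
    intro N
    rw [show (∑ i ∈ Finset.range N, g i)
        = (1/(2*(M:ℝ)-1)) * ((harmonic N : ℝ) - 2*(h 1 (M+N)) + 2*(h 1 M))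
      from partial_sum M hm N]
    ring
  rw [heq]
  exact tendsto_nhds_unique ht ht2
end

section
/- For all positive integers n and k, Σ_{i=1, i≠k}^∞ 1/(i^{2n}·(k−i)) = H_k/k^{2n} − (2n+1)/k^{2n+1} + Σ_{i=1}^{2n−1} ζ(2n+1−i)/k^i. -/
open scoped BigOperators

/-!
Write `S_m = ∑_{i ≠ k} 1 / (i^m (k - i))`. The partial fraction
`1 / (i^(m+1) (k - i)) = (1 / i^(m+1) + 1 / (i^m (k - i))) / k` gives the recursion
`S_(m+1) = (ζ(m+1) - 1 / k^(m+1) + S_m) / k`, which unrolls to the closed form for every `m ≥ 1`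
once `S_1 = (H_k - 2 / k) / k` is known. For the latter, `k / (i (k - i)) = 1 / i + 1 / (k - i)`:
the terms `i < k` contribute `2 H_(k-1) / k`, and the terms `i = k + l` contribute the telescoping
series `-(1 / k) ∑_l (1 / l - 1 / (l + k)) = -H_k / k`.
-/

open Finset Filter Topology

theorem one_div_pow_succ_mul_sub {F : Type*} [Field F] {x y : F} (hx : x ≠ 0) (hxy : y ≠ x)
    {m : ℕ} (hm : m ≠ 0) :
    1 / (y ^ (m + 1) * (x - y)) = (1 / y ^ (m + 1) + 1 / (y ^ m * (x - y))) / x := by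
  rcases eq_or_ne y 0 with rfl | hy
  · simp [hm]
  have := sub_ne_zero.2 hxy.symm
  field_simp
  ring

theorem Antitone.hasSum_sub_nat_add {u : ℕ → ℝ} (hu : Antitone u)
    (hlim : Tendsto u atTop (𝓝 0)) (K : ℕ) :
    HasSum (fun j ↦ u j - u (j + K)) (∑ i ∈ range K, u i) := by
  rw [hasSum_iff_tendsto_nat_of_nonneg fun j ↦ sub_nonneg.2 (hu (Nat.le_add_right j K))]
  have hpartial (N : ℕ) : ∑ j ∈ range N, (u j - u (j + K))
      = ∑ i ∈ range K, u i - ∑ i ∈ range K, u (N + i) := by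
    have h₁ := sum_range_add u N K
    have h₂ := sum_range_add u K N
    rw [add_comm K N] at h₂
    simp only [sum_sub_distrib, add_comm _ K]
    linarith
  simp_rw [hpartial]
  simpa using tendsto_const_nhds.sub
    (tendsto_finsetSum (range K) fun i _ ↦ hlim.comp (tendsto_add_atTop_nat i))

theorem sum_Icc_one_succ {M : Type*} [AddCommMonoid M] (f : ℕ → M) (m : ℕ) :
    ∑ i ∈ Icc 1 (m + 1), f i = f 1 + ∑ i ∈ Icc 1 m, f (i + 1) := by
  induction m with
  | zero => simp
  | succ m ih => rw [sum_Icc_succ_top (by omega), ih, sum_Icc_succ_top (by omega), add_assoc]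

theorem tsum_subtype_ne_pnat {α : Type*} [AddCommMonoid α] [TopologicalSpace α] (f : ℕ → α)
    (k : ℕ+) (h0 : f 0 = 0) (hk : f k = 0) :
    ∑' i : {i : ℕ+ // i ≠ k}, f i = ∑' j : ℕ, f j := by
  rw [← tsum_pnat_eq_tsum_of_eq_zero h0]
  exact tsum_subtype_eq_of_support_subset (s := {i | i ≠ k}) fun i hi hik ↦ hi (hik ▸ hk)

theorem sum_range_succ_one_div_eq_H (K : ℕ) : ∑ j ∈ range (K + 1), 1 / (j : ℝ) = H 1 K := by
  simp [sum_range_succ', H]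

theorem hasSum_one_div_mul_add {K : ℕ} (hK : K ≠ 0) :
    HasSum (fun j : ℕ ↦ 1 / (((j : ℝ) + 1) * ((j : ℝ) + 1 + K))) (H 1 K / K) := by
  have hu : Antitone fun j : ℕ ↦ 1 / ((j : ℝ) + 1) := fun a b hab ↦
    one_div_le_one_div_of_le (by positivity) (by gcongr)
  have hK' : (K : ℝ) ≠ 0 := by exact_mod_cast hK
  have hH : H 1 K = ∑ i ∈ range K, 1 / ((i : ℝ) + 1) := by simp [H]
  rw [hH]
  refine ((hu.hasSum_sub_nat_add tendsto_one_div_add_atTop_nhds_zero_nat K).div_const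
    K).congr_fun fun j ↦ ?_
  push_cast
  field_simp
  ring

theorem mul_sum_range_one_div_mul_sub (K : ℕ) :
    K * ∑ j ∈ range (K + 1), 1 / ((j : ℝ) * (K - j)) = 2 * (H 1 K - 1 / K) := by
  -- the corrections at `j = 0` and `j = K` compensate for `1 / 0 = 0`
  have hsplit : ∀ j ∈ range (K + 1), K * (1 / ((j : ℝ) * (K - j)))
      = 1 / (j : ℝ) + 1 / ((K - j : ℕ) : ℝ) - (if j = 0 then 1 / (K : ℝ) else 0)
        - (if j = K then 1 / (K : ℝ) else 0) := by
    intro j hj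
    have hjK : j ≤ K := Nat.lt_succ_iff.1 (mem_range.1 hj)
    rw [Nat.cast_sub hjK]
    rcases eq_or_ne j 0 with rfl | hj0
    · rcases eq_or_ne K 0 with rfl | hK0
      · simp
      · simp [hK0.symm]
    rcases eq_or_ne j K with rfl | hjK'
    · simp [hj0]
    have : (K : ℝ) - j ≠ 0 := sub_ne_zero.2 (by exact_mod_cast hjK'.symm)
    simp only [hj0, hjK', if_false]
    field_simp
    ring
  have hreflect : ∑ j ∈ range (K + 1), 1 / ((K - j : ℕ) : ℝ) = H 1 K := by
    rw [← sum_range_succ_one_div_eq_H, ← sum_range_reflect (fun j : ℕ ↦ 1 / (j : ℝ))]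
    simp only [Nat.add_sub_cancel]
  rw [mul_sum, sum_congr rfl hsplit]
  simp only [sum_sub_distrib, sum_add_distrib, hreflect, sum_range_succ_one_div_eq_H, sum_ite_eq',
    mem_range, Nat.lt_add_one, Nat.zero_lt_succ, if_true]
  ring

theorem hasSum_Z {p : ℕ} (hp : 2 ≤ p) : HasSum (fun j : ℕ ↦ 1 / (j : ℝ) ^ p) (Z p) := by
  rw [Z, tsum_pnat_eq_tsum_of_eq_zero (f := fun j : ℕ ↦ 1 / (j : ℝ) ^ p)
    (by simp [zero_pow (by omega : p ≠ 0)])]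
  exact (Real.summable_one_div_nat_pow.2 hp).hasSum

-- The terms `j = 0` and `j = K` of these series over `ℕ` vanish because `1 / 0 = 0`.
theorem hasSum_one_div_mul_sub {K : ℕ} (hK : K ≠ 0) :
    HasSum (fun j : ℕ ↦ 1 / ((j : ℝ) * (K - j))) ((H 1 K - 2 / K) / K) := by
  have hK' : (K : ℝ) ≠ 0 := by exact_mod_cast hK
  rw [← hasSum_nat_add_iff' (K + 1)]
  have hval : (H 1 K - 2 / K) / K - ∑ j ∈ range (K + 1), 1 / ((j : ℝ) * (K - j))
      = -(H 1 K / K) := by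
    rw [eq_div_of_mul_eq hK' ((mul_comm _ _).trans (mul_sum_range_one_div_mul_sub K))]
    field_simp
    ring
  rw [hval]
  refine (hasSum_one_div_mul_add hK).neg.congr_fun fun j ↦ ?_
  push_cast
  rw [show (K : ℝ) - (j + (K + 1)) = -(j + 1) by ring, mul_neg, div_neg]
  ring

theorem HasSum.one_div_pow_succ_mul_sub {K : ℕ} (hK : K ≠ 0) {m : ℕ} (hm : m ≠ 0) {S : ℝ}
    (hS : HasSum (fun j : ℕ ↦ 1 / ((j : ℝ) ^ m * (K - j))) S) :
    HasSum (fun j : ℕ ↦ 1 / ((j : ℝ) ^ (m + 1) * (K - j)))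
      ((Z (m + 1) - 1 / K ^ (m + 1) + S) / K) := by
  have hK' : (K : ℝ) ≠ 0 := by exact_mod_cast hK
  refine (((hasSum_Z (by omega)).sub (hasSum_ite_eq K _)).add hS).div_const _ |>.congr_fun
    fun j ↦ ?_
  rcases eq_or_ne j K with rfl | hj
  · simp
  · simp only [hj, if_false, sub_zero]
    exact _root_.one_div_pow_succ_mul_sub hK' (by exact_mod_cast hj) hm

theorem hasSum_one_div_pow_mul_sub {K : ℕ} (hK : K ≠ 0) {m : ℕ} (hm : m ≠ 0) :
    HasSum (fun j : ℕ ↦ 1 / ((j : ℝ) ^ m * (K - j)))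
      (H 1 K / K ^ m - (m + 1) / K ^ (m + 1) + ∑ i ∈ Icc 1 (m - 1), Z (m + 1 - i) / K ^ i) := by
  have hK' : (K : ℝ) ≠ 0 := by exact_mod_cast hK
  obtain ⟨m, rfl⟩ := Nat.exists_eq_add_one_of_ne_zero hm
  clear hm
  simp only [Nat.add_sub_cancel]
  induction m with
  | zero =>
    convert hasSum_one_div_mul_sub hK using 1
    · simp
    · rw [Icc_eq_empty (by omega), sum_empty]
      push_cast
      field_simp
      ring
  | succ m ih =>
    convert ih.one_div_pow_succ_mul_sub hK (by omega) using 1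
    rw [sum_Icc_one_succ]
    simp only [Nat.add_sub_add_right, pow_succ, ← div_div, ← sum_div]
    push_cast
    field_simp
    ring

theorem stmt9 (n k : ℕ+) :
    (∑' i : {i : ℕ+ // i ≠ k}, (1 : ℝ) / ((((i : ℕ+) : ℕ) : ℝ) ^ (2 * (n : ℕ)) * (((k : ℕ) : ℝ) - (((i : ℕ+) : ℕ) : ℝ))))
      = H 1 (k : ℕ) / ((k : ℕ) : ℝ) ^ (2 * (n : ℕ)) - (2 * ((n : ℕ) : ℝ) + 1) / ((k : ℕ) : ℝ) ^ (2 * (n : ℕ) + 1)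
        + ∑ i ∈ Finset.Icc 1 (2 * (n : ℕ) - 1), Z (2 * (n : ℕ) + 1 - i) / ((k : ℕ) : ℝ) ^ i := by
  have hm : 2 * (n : ℕ) ≠ 0 := by positivity
  rw [tsum_subtype_ne_pnat (fun j : ℕ ↦ 1 / ((j : ℝ) ^ (2 * (n : ℕ)) * (k - j))) k (by simp [hm])
    (by simp), (hasSum_one_div_pow_mul_sub k.ne_zero hm).tsum_eq]
  push_cast
  ring
end

section
/- The sum over k ≥ 1 of h_k^{(2)}/(2k−1)³ equals (31/64)·ζ(5) + (9/32)·ζ(2)·ζ(3). -/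
open scoped BigOperators

/-!
Write `λ(s) = ∑_{i ≥ 0} 1/(2i+1)^s = (1 - 2^{-s}) ζ(s)` and `L = ∑_j h_j^{(2)}/(2j+1)^3`;
the sum in question is `L + λ(5)`. Splitting `λ(2) λ(3)` along `i < j`, `i = j`, `i > j` gives
`λ(2) λ(3) = L + λ(5) + R`. The difference `R - L` is summed along the diagonals `|i - j| = m`:
for odd `x, y` with `y - x = 2m`, partial fractions of `1/(y^2 x^3) - 1/(x^2 y^3)` telescope to
`W(m) - 6 λ(2)/(2m)^3`, where the same weight `W(m)` is the sum of `1/(x^2 y^3)` along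
`x + y = 2m`, so that `∑ W(m) = λ(2) λ(3)`. Hence `R - L = λ(2) λ(3) - (3/4) λ(2) ζ(3)`, and
solving for `L` gives the claim.
-/

open Filter Finset

theorem Antitone.hasSum_sub_add {g : ℕ → ℝ} (hg : Antitone g)
    (hg0 : Tendsto g atTop (nhds 0)) (m : ℕ) :
    HasSum (fun i => g i - g (i + m)) (∑ t ∈ range m, g t) := by
  rw [hasSum_iff_tendsto_nat_of_nonneg fun i => sub_nonneg.2 (hg (Nat.le_add_right i m))]
  have hpartial : ∀ n, ∑ i ∈ range n, (g i - g (i + m))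
      = ∑ t ∈ range m, g t - ∑ t ∈ range m, g (n + t) := by
    intro n
    have hnm := sum_range_add g n m
    have hmn := sum_range_add g m n
    simp only [add_comm n m, add_comm _ m] at hnm ⊢
    rw [sum_sub_distrib]
    linarith
  have htail : Tendsto (fun n => ∑ t ∈ range m, g (n + t)) atTop (nhds 0) := by
    simpa using tendsto_finsetSum (range m) fun t _ => hg0.comp (tendsto_add_atTop_nat t)
  simpa [hpartial] using tendsto_const_nhds.sub htail

theorem Summable.tsum_eq_tsum_sum_antidiagonal {A α : Type*} [AddCommMonoid A] [HasAntidiagonal A]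
    [AddCommGroup α] [UniformSpace α] [IsUniformAddGroup α] [CompleteSpace α] [T0Space α]
    {f : A × A → α} (hf : Summable f) :
    ∑' p, f p = ∑' n, ∑ p ∈ antidiagonal n, f p := by
  rw [← HasAntidiagonal.sigmaAntidiagonalEquivProd.tsum_eq]
  refine (HasAntidiagonal.sigmaAntidiagonalEquivProd.summable_iff.2 hf).tsum_sigma.trans ?_
  simp_rw [← Finset.tsum_subtype]
  rfl

section Triangles

variable {a b : ℕ → ℝ}

lemma summable_sum_range_mul (ha0 : 0 ≤ a) (hb0 : 0 ≤ b) (ha : Summable a) (hb : Summable b) :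
    Summable fun j => (∑ i ∈ range j, a i) * b j :=
  (hb.mul_left (∑' i, a i)).of_nonneg_of_le
    (fun j => mul_nonneg (sum_nonneg fun i _ => ha0 i) (hb0 j))
    fun j => mul_le_mul_of_nonneg_right (ha.sum_le_tsum _ fun i _ => ha0 i) (hb0 j)

lemma summable_lower_triangle (ha0 : 0 ≤ a) (hb0 : 0 ≤ b) (ha : Summable a) (hb : Summable b) :
    Summable fun p : ℕ × ℕ => a p.1 * b (p.1 + p.2 + 1) :=
  have hinj : Function.Injective fun p : ℕ × ℕ => (p.1, p.1 + p.2 + 1) := fun p q hpq => by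
    simp only [Prod.mk.injEq] at hpq; ext <;> omega
  (ha.mul_of_nonneg hb ha0 hb0).comp_injective hinj

lemma summable_upper_triangle (ha0 : 0 ≤ a) (hb0 : 0 ≤ b) (ha : Summable a) (hb : Summable b) :
    Summable fun p : ℕ × ℕ => a (p.1 + p.2 + 1) * b p.1 :=
  have hinj : Function.Injective fun p : ℕ × ℕ => (p.1 + p.2 + 1, p.1) := fun p q hpq => by
    simp only [Prod.mk.injEq] at hpq; ext <;> omega
  (ha.mul_of_nonneg hb ha0 hb0).comp_injective hinj

lemma tsum_mul_tsum_eq_lower_add_diag_add_upper (ha0 : 0 ≤ a) (hb0 : 0 ≤ b)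
    (ha : Summable a) (hb : Summable b) :
    (∑' i, a i) * ∑' j, b j = ∑' j, (∑ i ∈ range j, a i) * b j + ∑' j, a j * b j
      + ∑' j, (∑' q, a (q + (j + 1))) * b j := by
  have hsplit : ∀ j, (∑' i, a i) * b j =
      (∑ i ∈ range j, a i) * b j + a j * b j + (∑' q, a (q + (j + 1))) * b j := fun j => by
    rw [← ha.sum_add_tsum_nat_add (j + 1), sum_range_succ]
    ring
  have hsL := summable_sum_range_mul ha0 hb0 ha hb
  have hsD : Summable fun j => a j * b j :=
    (hb.mul_left (∑' i, a i)).of_nonneg_of_le (fun j => mul_nonneg (ha0 j) (hb0 j))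
      fun j => mul_le_mul_of_nonneg_right (ha.le_tsum j fun k _ => ha0 k) (hb0 j)
  have hsU : Summable fun j => (∑' q, a (q + (j + 1))) * b j :=
    ((hb.mul_left _).sub (hsL.add hsD)).congr fun j => by rw [hsplit j]; ring
  rw [← tsum_mul_left, tsum_congr hsplit, (hsL.add hsD).tsum_add hsU, hsL.tsum_add hsD]

lemma tsum_lower_triangle (ha0 : 0 ≤ a) (hb0 : 0 ≤ b) (ha : Summable a) (hb : Summable b) :
    ∑' p : ℕ × ℕ, a p.1 * b (p.1 + p.2 + 1) = ∑' j, (∑ i ∈ range j, a i) * b j := by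
  have hdiag : ∀ n, ∑ p ∈ antidiagonal n, a p.1 * b (p.1 + p.2 + 1)
      = (∑ i ∈ range (n + 1), a i) * b (n + 1) := fun n => by
    rw [sum_mul, ← Nat.sum_antidiagonal_eq_sum_range_succ_mk (fun p => a p.1 * b (n + 1))]
    refine sum_congr rfl fun p hp => ?_
    rw [HasAntidiagonal.mem_antidiagonal.1 hp]
  rw [(summable_lower_triangle ha0 hb0 ha hb).tsum_eq_tsum_sum_antidiagonal, tsum_congr hdiag,
    ← tsum_pnat_eq_tsum_succ (f := fun j => (∑ i ∈ range j, a i) * b j)]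
  exact tsum_pnat_eq_tsum_of_eq_zero (f := fun j => (∑ i ∈ range j, a i) * b j) (by simp)

lemma tsum_upper_triangle (ha0 : 0 ≤ a) (hb0 : 0 ≤ b) (ha : Summable a) (hb : Summable b) :
    ∑' p : ℕ × ℕ, a (p.1 + p.2 + 1) * b p.1 = ∑' j, (∑' q, a (q + (j + 1))) * b j := by
  rw [(summable_upper_triangle ha0 hb0 ha hb).tsum_prod]
  refine tsum_congr fun j => ?_
  rw [← tsum_mul_right]
  exact tsum_congr fun q => by ring_nf

lemma two_mul_tsum_sum_range_mul_eq (ha0 : 0 ≤ a) (hb0 : 0 ≤ b)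
    (ha : Summable a) (hb : Summable b) :
    2 * ∑' j, (∑ i ∈ range j, a i) * b j = (∑' i, a i) * (∑' j, b j) - ∑' j, a j * b j
      - ∑' m, ∑' i, (a (i + (m + 1)) * b i - a i * b (i + (m + 1))) := by
  have hupper := summable_upper_triangle ha0 hb0 ha hb
  have hlower := summable_lower_triangle ha0 hb0 ha hb
  have hdiff : ∑' m, ∑' i, (a (i + (m + 1)) * b i - a i * b (i + (m + 1))) =
      ∑' j, (∑' q, a (q + (j + 1))) * b j - ∑' j, (∑ i ∈ range j, a i) * b j := by
    rw [← tsum_upper_triangle ha0 hb0 ha hb, ← tsum_lower_triangle ha0 hb0 ha hb,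
      ← hupper.tsum_sub hlower, (hupper.sub hlower).tsum_prod]
    exact (hupper.sub hlower).tsum_comm
  rw [hdiff, tsum_mul_tsum_eq_lower_add_diag_add_upper ha0 hb0 ha hb]
  ring

end Triangles

lemma one_div_sq_mul_one_div_cube {x y : ℝ} (hx : x ≠ 0) (hy : y ≠ 0) (hxy : x + y ≠ 0) :
    1 / x ^ 2 * (1 / y ^ 3) =
      3 / (x + y) ^ 4 * (1 / x) + 1 / (x + y) ^ 3 * (1 / x ^ 2) + 3 / (x + y) ^ 4 * (1 / y)
        + 2 / (x + y) ^ 3 * (1 / y ^ 2) + 1 / (x + y) ^ 2 * (1 / y ^ 3) := by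
  field_simp
  ring

lemma one_div_sq_mul_one_div_cube_sub {x y : ℝ} (hx : x ≠ 0) (hy : y ≠ 0)
    (hxy : y - x ≠ 0) :
    1 / y ^ 2 * (1 / x ^ 3) - 1 / x ^ 2 * (1 / y ^ 3) =
      6 / (y - x) ^ 4 * (1 / x - 1 / y) - 3 / (y - x) ^ 3 * (1 / x ^ 2 + 1 / y ^ 2)
        + 1 / (y - x) ^ 2 * (1 / x ^ 3 - 1 / y ^ 3) := by
  field_simp
  ring

noncomputable def oddInvPow (s i : ℕ) : ℝ := 1 / (2 * (i : ℝ) + 1) ^ s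

noncomputable def dirichletLambda (s : ℕ) : ℝ := ∑' i, oddInvPow s i

lemma h_eq_sum_oddInvPow (s k : ℕ) : h s k = ∑ i ∈ range k, oddInvPow s i := rfl

lemma h_succ_s15 (s k : ℕ) : h s (k + 1) = h s k + oddInvPow s k := sum_range_succ _ _

lemma oddInvPow_mul (s t i : ℕ) : oddInvPow s i * oddInvPow t i = oddInvPow (s + t) i := by
  simp only [oddInvPow, pow_add, one_div, mul_inv]

lemma oddInvPow_nonneg (s i : ℕ) : 0 ≤ oddInvPow s i := by unfold oddInvPow; positivity

lemma oddInvPow_antitone (s : ℕ) : Antitone (oddInvPow s) := fun i j hij => by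
  unfold oddInvPow
  gcongr

lemma tendsto_oddInvPow_atTop {s : ℕ} (hs : s ≠ 0) :
    Tendsto (oddInvPow s) atTop (nhds 0) := by
  unfold oddInvPow
  simp only [one_div]
  refine tendsto_inv_atTop_zero.comp <| (tendsto_pow_atTop hs).comp ?_
  exact tendsto_atTop_add_const_right _ 1 <|
    (tendsto_natCast_atTop_atTop).const_mul_atTop two_pos

lemma summable_oddInvPow {s : ℕ} (hs : 1 < s) : Summable (oddInvPow s) := by
  have := (Real.summable_one_div_nat_pow.2 hs).comp_injective
    (i := fun i => 2 * i + 1) fun a b hab => by simpa using hab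
  unfold oddInvPow
  simpa [Function.comp_def] using this

lemma hasSum_dirichletLambda {s : ℕ} (hs : 1 < s) : HasSum (oddInvPow s) (dirichletLambda s) :=
  (summable_oddInvPow hs).hasSum

lemma Z_eq_tsum_nat {s : ℕ} (hs : s ≠ 0) : Z s = ∑' n : ℕ, 1 / (n : ℝ) ^ s :=
  tsum_pnat_eq_tsum_of_eq_zero (f := fun n : ℕ => 1 / (n : ℝ) ^ s) (by simp [hs])

lemma hasSum_Z_succ {s : ℕ} (hs : 1 < s) :
    HasSum (fun n : ℕ => 1 / ((n : ℝ) + 1) ^ s) (Z s) := by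
  have hsum := (summable_nat_add_iff 1).2 (Real.summable_one_div_nat_pow.2 hs)
  rw [Z, tsum_pnat_eq_tsum_succ (f := fun n : ℕ => 1 / (n : ℝ) ^ s)]
  push_cast at hsum ⊢
  exact hsum.hasSum

lemma dirichletLambda_eq {s : ℕ} (hs : 1 < s) :
    dirichletLambda s = (1 - 1 / 2 ^ s) * Z s := by
  set f : ℕ → ℝ := fun n => 1 / (n : ℝ) ^ s
  have hf : Summable f := Real.summable_one_div_nat_pow.2 hs
  have heven : (fun k => f (2 * k)) = fun k => 1 / 2 ^ s * f k := by
    ext k; simp only [f, Nat.cast_mul, Nat.cast_ofNat, mul_pow]; field_simp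
  have hodd : (fun k => f (2 * k + 1)) = oddInvPow s := by
    ext k; simp [f, oddInvPow]
  have hsplit := tsum_even_add_odd (f := f) (heven ▸ hf.mul_left _)
    (hodd ▸ summable_oddInvPow hs)
  rw [heven, hodd, tsum_mul_left, ← Z_eq_tsum_nat (by omega)] at hsplit
  rw [dirichletLambda]
  linarith

lemma hasSum_oddInvPow_sub_add {s : ℕ} (hs : s ≠ 0) (m : ℕ) :
    HasSum (fun i => oddInvPow s i - oddInvPow s (i + m)) (h s m) :=
  (oddInvPow_antitone s).hasSum_sub_add (tendsto_oddInvPow_atTop hs) m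

lemma hasSum_oddInvPow_add {s : ℕ} (hs : 1 < s) (m : ℕ) :
    HasSum (fun i => oddInvPow s (i + m)) (dirichletLambda s - h s m) :=
  (hasSum_nat_add_iff' m).2 (hasSum_dirichletLambda hs)

noncomputable def antidiagonalWeight (m : ℕ) : ℝ :=
  6 / (2 * m : ℝ) ^ 4 * h 1 m + 3 / (2 * m : ℝ) ^ 3 * h 2 m + 1 / (2 * m : ℝ) ^ 2 * h 3 m

lemma sum_antidiagonal_oddInvPow_mul (n : ℕ) :
    ∑ p ∈ antidiagonal n, oddInvPow 2 p.1 * oddInvPow 3 p.2 = antidiagonalWeight (n + 1) := by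
  have hpoint : ∀ p ∈ antidiagonal n, oddInvPow 2 p.1 * oddInvPow 3 p.2 =
      3 / (2 * (n + 1 : ℕ) : ℝ) ^ 4 * oddInvPow 1 p.1
        + 1 / (2 * (n + 1 : ℕ) : ℝ) ^ 3 * oddInvPow 2 p.1
        + 3 / (2 * (n + 1 : ℕ) : ℝ) ^ 4 * oddInvPow 1 p.2
        + 2 / (2 * (n + 1 : ℕ) : ℝ) ^ 3 * oddInvPow 2 p.2
        + 1 / (2 * (n + 1 : ℕ) : ℝ) ^ 2 * oddInvPow 3 p.2 := by
    rintro ⟨i, j⟩ hij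
    have hsum : (2 * i + 1 : ℝ) + (2 * j + 1) = 2 * (n + 1 : ℕ) := by
      rw [HasAntidiagonal.mem_antidiagonal] at hij
      rw [← hij]; push_cast; ring
    simp only [oddInvPow, pow_one, ← hsum]
    exact one_div_sq_mul_one_div_cube (by positivity) (by positivity) (by positivity)
  have hfst : ∀ s, ∑ p ∈ antidiagonal n, oddInvPow s p.1 = h s (n + 1) := fun s =>
    Nat.sum_antidiagonal_eq_sum_range_succ_mk (fun p => oddInvPow s p.1) n
  have hsnd : ∀ s, ∑ p ∈ antidiagonal n, oddInvPow s p.2 = h s (n + 1) := fun s => by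
    rw [← hfst, ← Nat.sum_antidiagonal_swap]
    rfl
  simp only [sum_congr rfl hpoint, sum_add_distrib, ← mul_sum, hfst, hsnd, antidiagonalWeight]
  ring

lemma hasSum_antidiagonalWeight :
    HasSum (fun n => antidiagonalWeight (n + 1)) (dirichletLambda 2 * dirichletLambda 3) := by
  have h2 := summable_oddInvPow one_lt_two
  have h3 := summable_oddInvPow (by norm_num : 1 < 3)
  have hprod := h2.mul_of_nonneg h3 (oddInvPow_nonneg 2) (oddInvPow_nonneg 3)
  have hsum := summable_sum_mul_antidiagonal_of_summable_mul hprod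
  rw [dirichletLambda, dirichletLambda, h2.tsum_mul_tsum_eq_tsum_sum_antidiagonal h3 hprod]
  simpa only [sum_antidiagonal_oddInvPow_mul] using hsum.hasSum

lemma hasSum_oddInvPow_shift_sub {m : ℕ} (hm : m ≠ 0) :
    HasSum (fun i => oddInvPow 2 (i + m) * oddInvPow 3 i - oddInvPow 2 i * oddInvPow 3 (i + m))
      (antidiagonalWeight m - 3 / 4 * dirichletLambda 2 / m ^ 3) := by
  have hsum := (((hasSum_oddInvPow_sub_add one_ne_zero m).mul_left (6 / (2 * m : ℝ) ^ 4)).sub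
    (((hasSum_dirichletLambda one_lt_two).add
      (hasSum_oddInvPow_add one_lt_two m)).mul_left (3 / (2 * m : ℝ) ^ 3))).add
    ((hasSum_oddInvPow_sub_add (by norm_num : (3 : ℕ) ≠ 0) m).mul_left (1 / (2 * m : ℝ) ^ 2))
  have hm' : (m : ℝ) ≠ 0 := by exact_mod_cast hm
  have hvalue : antidiagonalWeight m - 3 / 4 * dirichletLambda 2 / m ^ 3 =
      6 / (2 * m : ℝ) ^ 4 * h 1 m - 3 / (2 * m : ℝ) ^ 3 * (dirichletLambda 2
        + (dirichletLambda 2 - h 2 m)) + 1 / (2 * m : ℝ) ^ 2 * h 3 m := by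
    unfold antidiagonalWeight
    field_simp
    ring
  refine hvalue ▸ hsum.congr_fun fun i => ?_
  have hdiff : (2 * (i + m : ℕ) + 1 : ℝ) - (2 * i + 1) = 2 * m := by push_cast; ring
  simp only [oddInvPow, pow_one, ← hdiff]
  exact one_div_sq_mul_one_div_cube_sub (by positivity) (by positivity) (by rw [hdiff]; positivity)

lemma tsum_pnat_h_two_div_eq :
    ∑' k : ℕ+, h 2 (k : ℕ) / (2 * ((k : ℕ) : ℝ) - 1) ^ 3
      = ∑' j, h 2 j * oddInvPow 3 j + dirichletLambda 5 := by
  have hterm : ∀ j : ℕ, h 2 (j + 1) / (2 * ((j + 1 : ℕ) : ℝ) - 1) ^ 3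
      = h 2 j * oddInvPow 3 j + oddInvPow 5 j := fun j => by
    have hden : 2 * ((j + 1 : ℕ) : ℝ) - 1 = 2 * j + 1 := by push_cast; ring
    rw [h_succ_s15, ← oddInvPow_mul 2 3, hden]
    simp only [oddInvPow]
    ring
  have hsum : Summable fun j => h 2 j * oddInvPow 3 j :=
    summable_sum_range_mul (oddInvPow_nonneg 2) (oddInvPow_nonneg 3)
      (summable_oddInvPow one_lt_two) (summable_oddInvPow (by norm_num))
  rw [tsum_pnat_eq_tsum_succ (f := fun k => h 2 k / (2 * (k : ℝ) - 1) ^ 3), tsum_congr hterm,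
    hsum.tsum_add (summable_oddInvPow (by norm_num))]
  rfl

lemma tsum_tsum_oddInvPow_shift_sub :
    ∑' m, ∑' i, (oddInvPow 2 (i + (m + 1)) * oddInvPow 3 i
        - oddInvPow 2 i * oddInvPow 3 (i + (m + 1)))
      = dirichletLambda 2 * dirichletLambda 3 - 3 / 4 * dirichletLambda 2 * Z 3 := by
  have hzeta := hasSum_Z_succ (by norm_num : 1 < 3)
  rw [tsum_congr fun m => (hasSum_oddInvPow_shift_sub m.succ_ne_zero).tsum_eq]
  refine ((hasSum_antidiagonalWeight.sub (hzeta.mul_left (3 / 4 * dirichletLambda 2))).congr_fun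
    fun n => ?_).tsum_eq
  push_cast
  ring

theorem stmt15 :
    (∑' k : ℕ+, h 2 (k : ℕ) / (2 * ((k : ℕ) : ℝ) - 1) ^ 3) = 31 / 64 * Z 5 + 9 / 32 * Z 2 * Z 3 := by
  have hlower := two_mul_tsum_sum_range_mul_eq (oddInvPow_nonneg 2) (oddInvPow_nonneg 3)
    (summable_oddInvPow one_lt_two) (summable_oddInvPow (by norm_num))
  have hdiag : ∑' j, oddInvPow 2 j * oddInvPow 3 j = dirichletLambda 5 :=
    tsum_congr fun j => oddInvPow_mul 2 3 j
  rw [hdiag, tsum_tsum_oddInvPow_shift_sub, ← dirichletLambda, ← dirichletLambda] at hlower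
  simp only [← h_eq_sum_oddInvPow] at hlower
  rw [tsum_pnat_h_two_div_eq]
  linear_combination (1 / 2) * hlower + (1 / 2) * dirichletLambda_eq (by norm_num : 1 < 5)
    + (3 / 8 * Z 3) * dirichletLambda_eq one_lt_two
end
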